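/- arXiv:2407.13169 — 3 statements merged into one kernel-verified Lean document; each statement's English description precedes it below -/
import Mathlib

section
/- (1/2)·E[(Y′ − Y)²] = σ² + m·τ²·(1 − (1/m)·Σ_{j=1}^m Σ_{b=1}^{B_j} φ_{bj} · φ′_{bj}), i.e., the semivariogram of the RPBART model conditional on the trees and bandwidth parameters equals the noise variance plus m·τ² times one minus the average probability that the two inputs are assigned to the same terminal-node partition. -/
/-!
`Y′ − Y` splits into the noise increment `ε′ − ε` and one increment `∑_b μ_{bj} (z′_{bj} − z_{bj})`
per tree. These are mutually independent and centred, so the second moment of their sum is the sum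
of their second moments. The noise contributes `2σ²` because `ε` and `ε′` are uncorrelated. Within
a tree the leaf values are independent of the paths and `E[μ_b μ_d] = τ² δ_{bd}`, so the tree
contributes `τ² ∑_b E[(z′_b − z_b)²] = τ² ∑_b (φ_b + φ′_b − 2 φ_b φ′_b) = 2τ² (1 − ∑_b φ_b φ′_b)`,
using `∑_b φ_b = ∑_b φ′_b = 1`.
-/

open MeasureTheory ProbabilityTheory

/-- Codomain of the bundled per-tree data (for `some j`) and of the noise pair (for `none`). -/
def mixSpace (m : ℕ) (B : Fin m → ℕ) : Option (Fin m) → Type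
  | none => ℝ × ℝ
  | some j => (Fin (B j) → ℝ) × (Fin (B j) → ℝ) × (Fin (B j) → ℝ)

instance mixSpaceMeasurableSpace (m : ℕ) (B : Fin m → ℕ) :
    (i : Option (Fin m)) → MeasurableSpace (mixSpace m B i)
  | none => inferInstanceAs (MeasurableSpace (ℝ × ℝ))
  | some j =>
      inferInstanceAs (MeasurableSpace ((Fin (B j) → ℝ) × (Fin (B j) → ℝ) × (Fin (B j) → ℝ)))

/-- Bundle the per-tree collections `(μ_{·j}, z_{·j}, z′_{·j})` and the noise pair `(ε, ε′)`
into a single family indexed by `Option (Fin m)`. -/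
def mixBundle {Ω : Type*} {m : ℕ} {B : Fin m → ℕ}
    (μ z z' : (j : Fin m) → Fin (B j) → Ω → ℝ) (ε ε' : Ω → ℝ) :
    (i : Option (Fin m)) → Ω → mixSpace m B i
  | none => fun ω => (ε ω, ε' ω)
  | some j => fun ω => (fun b => μ j b ω, fun b => z j b ω, fun b => z' j b ω)

section

variable {Ω : Type*} {mΩ : MeasurableSpace Ω} {P : Measure Ω}

lemma integral_sq_sum_of_pairwise_indepFun [IsFiniteMeasure P] {ι : Type*} [Fintype ι]
    {X : ι → Ω → ℝ} (hX : ∀ i, MemLp (X i) 2 P) (hmean : ∀ i, P[X i] = 0)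
    (hindep : Pairwise fun i j => X i ⟂ᵢ[P] X j) :
    ∫ ω, (∑ i, X i ω) ^ 2 ∂P = ∑ i, ∫ ω, X i ω ^ 2 ∂P := by
  have hsum_mean : ∫ ω, ∑ i, X i ω ∂P = 0 := by
    rw [integral_finsetSum _ fun i _ => (hX i).integrable one_le_two]
    exact Finset.sum_eq_zero fun i _ => hmean i
  have hvar := IndepFun.variance_sum (s := Finset.univ) (fun i _ => hX i)
    fun i _ j _ hij => hindep hij
  rw [Finset.sum_fn, variance_of_integral_eq_zero
    (Finset.aemeasurable_fun_sum _ fun i _ => (hX i).aemeasurable) hsum_mean] at hvar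
  simpa [variance_of_integral_eq_zero (hX _).aemeasurable (hmean _)] using hvar

lemma integral_sq_sub_of_covariance_eq_zero [IsFiniteMeasure P] {X Y : Ω → ℝ}
    (hX : MemLp X 2 P) (hY : MemLp Y 2 P) (hXmean : P[X] = 0) (hYmean : P[Y] = 0)
    (hcov : cov[X, Y; P] = 0) :
    ∫ ω, (X ω - Y ω) ^ 2 ∂P = Var[X; P] + Var[Y; P] := by
  have hmean : ∫ ω, X ω - Y ω ∂P = 0 := by
    rw [integral_sub (hX.integrable one_le_two) (hY.integrable one_le_two), hXmean, hYmean,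
      sub_zero]
  rw [← variance_of_integral_eq_zero (X := fun ω => X ω - Y ω)
    (hX.aemeasurable.sub hY.aemeasurable) hmean, variance_fun_sub hX hY, hcov]
  ring

lemma ProbabilityTheory.IndepFun.memLp_two_mul {X Y : Ω → ℝ} (hXY : X ⟂ᵢ[P] Y)
    (hX : MemLp X 2 P) (hY : MemLp Y 2 P) : MemLp (X * Y) 2 P := by
  refine (memLp_two_iff_integrable_sq (hX.1.mul hY.1)).2 ?_
  simpa [mul_pow, Function.comp_def, Pi.mul_def] using
    (hXY.comp (measurable_id.pow_const 2) (measurable_id.pow_const 2)).integrable_mul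
      hX.integrable_sq hY.integrable_sq

lemma integral_mul_eq_ite_of_iIndepFun {ι : Type*} [DecidableEq ι] {ξ : ι → Ω → ℝ} {τ : ℝ}
    (hξ : ∀ b, AEStronglyMeasurable (ξ b) P) (hmean : ∀ b, P[ξ b] = 0)
    (hvar : ∀ b, Var[ξ b; P] = τ ^ 2) (hindep : iIndepFun ξ P) (b d : ι) :
    ∫ ω, ξ b ω * ξ d ω ∂P = if b = d then τ ^ 2 else 0 := by
  split_ifs with hbd
  · subst hbd
    simp_rw [← sq, ← hvar b, variance_of_integral_eq_zero (hξ b).aemeasurable (hmean b)]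
  · rw [(hindep.indepFun hbd).integral_fun_mul_eq_mul_integral (hξ b) (hξ d), hmean, zero_mul]

section RandomCoefficients

variable {ι : Type*} [Fintype ι] {ξ w : ι → Ω → ℝ}

lemma memLp_sum_mul_of_indepFun (hξ : ∀ b, MemLp (ξ b) 2 P) (hw : ∀ b, MemLp (w b) 2 P)
    (hξw : (fun ω b => ξ b ω) ⟂ᵢ[P] (fun ω b => w b ω)) :
    MemLp (fun ω => ∑ b, ξ b ω * w b ω) 2 P :=
  memLp_finsetSum _ fun b _ =>
    (hξw.comp (measurable_pi_apply b) (measurable_pi_apply b)).memLp_two_mul (hξ b) (hw b)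

lemma integral_sum_mul_of_indepFun [IsFiniteMeasure P] (hξ : ∀ b, MemLp (ξ b) 2 P)
    (hw : ∀ b, MemLp (w b) 2 P) (hξw : (fun ω b => ξ b ω) ⟂ᵢ[P] (fun ω b => w b ω))
    (hmean : ∀ b, P[ξ b] = 0) :
    ∫ ω, ∑ b, ξ b ω * w b ω ∂P = 0 := by
  have hξw_apply : ∀ b, ξ b ⟂ᵢ[P] w b := fun b =>
    hξw.comp (measurable_pi_apply b) (measurable_pi_apply b)
  refine (integral_finsetSum Finset.univ fun b _ => ?_).trans (Finset.sum_eq_zero fun b _ => ?_)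
  · exact ((hξw_apply b).memLp_two_mul (hξ b) (hw b)).integrable one_le_two
  · rw [(hξw_apply b).integral_fun_mul_eq_mul_integral (hξ b).1 (hw b).1, hmean, zero_mul]

lemma integral_sq_sum_mul_of_indepFun [DecidableEq ι] {τ : ℝ} (hξ : ∀ b, MemLp (ξ b) 2 P)
    (hw : ∀ b, MemLp (w b) 2 P) (hξw : (fun ω b => ξ b ω) ⟂ᵢ[P] (fun ω b => w b ω))
    (hcov : ∀ b d, ∫ ω, ξ b ω * ξ d ω ∂P = if b = d then τ ^ 2 else 0) :
    ∫ ω, (∑ b, ξ b ω * w b ω) ^ 2 ∂P = τ ^ 2 * ∑ b, ∫ ω, w b ω ^ 2 ∂P := by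
  have hterm : ∀ b, MemLp (fun ω => ξ b ω * w b ω) 2 P := fun b =>
    (hξw.comp (measurable_pi_apply b) (measurable_pi_apply b)).memLp_two_mul (hξ b) (hw b)
  have hprod : ∀ b d, ∫ ω, (ξ b ω * w b ω) * (ξ d ω * w d ω) ∂P
      = (∫ ω, ξ b ω * ξ d ω ∂P) * ∫ ω, w b ω * w d ω ∂P := fun b d => by
    have h := hξw.comp (φ := fun x : ι → ℝ => x b * x d) (ψ := fun x : ι → ℝ => x b * x d)
      (by fun_prop) (by fun_prop)
    simp_rw [mul_mul_mul_comm _ (w b _)]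
    exact h.integral_fun_mul_eq_mul_integral ((hξ b).1.mul (hξ d).1) ((hw b).1.mul (hw d).1)
  have hint : ∀ b d, Integrable (fun ω => (ξ b ω * w b ω) * (ξ d ω * w d ω)) P :=
    fun b d => (hterm b).integrable_mul (hterm d)
  calc ∫ ω, (∑ b, ξ b ω * w b ω) ^ 2 ∂P
      = ∑ b, ∑ d, ∫ ω, (ξ b ω * w b ω) * (ξ d ω * w d ω) ∂P := by
        simp_rw [sq, Finset.sum_mul_sum]
        rw [integral_finsetSum _ fun b _ => integrable_finsetSum _ fun d _ => hint b d]
        exact Finset.sum_congr rfl fun b _ => integral_finsetSum _ fun d _ => hint b d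
    _ = τ ^ 2 * ∑ b, ∫ ω, w b ω ^ 2 ∂P := by
        simp [hprod, hcov, ite_mul, Finset.mul_sum, sq]

end RandomCoefficients

lemma sum_integral_eq_one_of_ae_sum_eq_one [IsProbabilityMeasure P] {ι : Type*} [Fintype ι]
    {Z : ι → Ω → ℝ} (hZ : ∀ b, Integrable (Z b) P) (hsum : ∀ᵐ ω ∂P, ∑ b, Z b ω = 1) :
    ∑ b, ∫ ω, Z b ω ∂P = 1 := by
  rw [← integral_finsetSum _ fun b _ => hZ b, integral_congr_ae hsum]
  simp

section ZeroOne

variable {Z Z' : Ω → ℝ}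

lemma integral_eq_measure_of_zero_or_one (hZ : Measurable Z) (h01 : ∀ ω, Z ω = 0 ∨ Z ω = 1) :
    ∫ ω, Z ω ∂P = (P {ω | Z ω = 1}).toReal := by
  have hind : Z = {ω | Z ω = 1}.indicator 1 := by
    funext ω
    rcases h01 ω with h | h <;> simp [h]
  conv_lhs => rw [hind]
  exact integral_indicator_one (s := {ω | Z ω = 1}) (hZ (measurableSet_singleton 1))

lemma memLp_of_zero_or_one [IsFiniteMeasure P] {p : ENNReal} (hZ : Measurable Z)
    (h01 : ∀ ω, Z ω = 0 ∨ Z ω = 1) : MemLp Z p P :=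
  MemLp.of_bound hZ.aestronglyMeasurable 1
    (ae_of_all _ fun ω => by rcases h01 ω with h | h <;> simp [h])

lemma integral_sq_sub_of_zero_or_one [IsFiniteMeasure P] (hZ : Measurable Z)
    (hZ' : Measurable Z') (h01 : ∀ ω, Z ω = 0 ∨ Z ω = 1) (h01' : ∀ ω, Z' ω = 0 ∨ Z' ω = 1)
    (hindep : Z ⟂ᵢ[P] Z') :
    ∫ ω, (Z' ω - Z ω) ^ 2 ∂P = P[Z] + P[Z'] - 2 * (P[Z] * P[Z']) := by
  have hZi : Integrable Z P := (memLp_of_zero_or_one hZ h01).integrable le_rfl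
  have hZi' : Integrable Z' P := (memLp_of_zero_or_one hZ' h01').integrable le_rfl
  have hprod : Integrable (fun ω => 2 * (Z ω * Z' ω)) P :=
    (hZi.mul_of_top_left (memLp_of_zero_or_one hZ' h01')).const_mul 2
  have hsq : ∀ ω, (Z' ω - Z ω) ^ 2 = Z ω + Z' ω - 2 * (Z ω * Z' ω) := fun ω => by
    rcases h01 ω with h | h <;> rcases h01' ω with h' | h' <;> norm_num [h, h']
  simp_rw [hsq]
  rw [integral_sub (f := fun ω => Z ω + Z' ω) (hZi.add hZi') hprod, integral_add hZi hZi',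
    integral_const_mul,
    hindep.integral_fun_mul_eq_mul_integral hZ.aestronglyMeasurable hZ'.aestronglyMeasurable]

lemma sum_integral_sq_sub_of_zero_or_one [IsProbabilityMeasure P] {ι : Type*} [Fintype ι]
    {z z' : ι → Ω → ℝ} {φ φ' : ι → ℝ} (hz : ∀ b, Measurable (z b)) (hz' : ∀ b, Measurable (z' b))
    (hz01 : ∀ b ω, z b ω = 0 ∨ z b ω = 1) (hz'01 : ∀ b ω, z' b ω = 0 ∨ z' b ω = 1)
    (hzsum : ∀ᵐ ω ∂P, ∑ b, z b ω = 1) (hz'sum : ∀ᵐ ω ∂P, ∑ b, z' b ω = 1)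
    (hzprob : ∀ b, (P {ω | z b ω = 1}).toReal = φ b)
    (hz'prob : ∀ b, (P {ω | z' b ω = 1}).toReal = φ' b)
    (hzz' : ∀ b, z b ⟂ᵢ[P] z' b) :
    ∑ b, ∫ ω, (z' b ω - z b ω) ^ 2 ∂P = 2 * (1 - ∑ b, φ b * φ' b) := by
  have hφ : ∀ b, P[z b] = φ b := fun b => by
    rw [integral_eq_measure_of_zero_or_one (hz b) (hz01 b), hzprob]
  have hφ' : ∀ b, P[z' b] = φ' b := fun b => by
    rw [integral_eq_measure_of_zero_or_one (hz' b) (hz'01 b), hz'prob]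
  have hφsum : ∑ b, φ b = 1 := by
    simpa [hφ] using
      sum_integral_eq_one_of_ae_sum_eq_one
        (fun b => (memLp_of_zero_or_one (hz b) (hz01 b)).integrable le_rfl) hzsum
  have hφ'sum : ∑ b, φ' b = 1 := by
    simpa [hφ'] using
      sum_integral_eq_one_of_ae_sum_eq_one
        (fun b => (memLp_of_zero_or_one (hz' b) (hz'01 b)).integrable le_rfl) hz'sum
  simp_rw [integral_sq_sub_of_zero_or_one (hz _) (hz' _) (hz01 _) (hz'01 _) (hzz' _), hφ, hφ',
    Finset.sum_sub_distrib, Finset.sum_add_distrib, ← Finset.mul_sum, hφsum, hφ'sum]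
  ring

end ZeroOne

end

/-- The contribution of tree `j` (index `some j`) or of the noise (index `none`) to `Y′ − Y`. -/
def mixIncrement {m : ℕ} {B : Fin m → ℕ} : (i : Option (Fin m)) → mixSpace m B i → ℝ
  | none => fun p => p.2 - p.1
  | some _ => fun p => ∑ b, p.1 b * (p.2.2 b - p.2.1 b)

lemma measurable_mixIncrement {m : ℕ} {B : Fin m → ℕ} (i : Option (Fin m)) :
    Measurable (mixIncrement (B := B) i) := by
  cases i <;> simp only [mixIncrement] <;> fun_prop

theorem rpbart_conditional_semivariogram_general
    {Ω : Type*} [MeasureSpace Ω] [IsProbabilityMeasure (ℙ : Measure Ω)]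
    (m : ℕ) (hm : 1 ≤ m) (B : Fin m → ℕ)
    (τ σ : ℝ)
    (μ z z' : (j : Fin m) → Fin (B j) → Ω → ℝ)
    (φ φ' : (j : Fin m) → Fin (B j) → ℝ)
    (ε ε' : Ω → ℝ)
    (hμL2 : ∀ j b, MemLp (μ j b) 2 ℙ)
    (hμmean : ∀ j b, 𝔼[μ j b] = 0)
    (hμvar : ∀ j b, variance (μ j b) ℙ = τ ^ 2)
    (hμindep : ∀ j, iIndepFun (μ j) ℙ)
    (hzmeas : ∀ j b, Measurable (z j b)) (hz'meas : ∀ j b, Measurable (z' j b))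
    (hz01 : ∀ j b ω, z j b ω = 0 ∨ z j b ω = 1)
    (hz'01 : ∀ j b ω, z' j b ω = 0 ∨ z' j b ω = 1)
    (hzsum : ∀ j, ∀ᵐ ω ∂ℙ, (∑ b, z j b ω) = 1)
    (hz'sum : ∀ j, ∀ᵐ ω ∂ℙ, (∑ b, z' j b ω) = 1)
    (hzprob : ∀ j b, (ℙ {ω | z j b ω = 1}).toReal = φ j b)
    (hz'prob : ∀ j b, (ℙ {ω | z' j b ω = 1}).toReal = φ' j b)
    (hμ_zz' : ∀ j, IndepFun (fun ω (b : Fin (B j)) => μ j b ω)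
        (fun ω => ((fun b => z j b ω), fun b => z' j b ω)) ℙ)
    (hzz' : ∀ j b d, IndepFun (z j b) (z' j d) ℙ)
    (hεL2 : MemLp ε 2 ℙ) (hε'L2 : MemLp ε' 2 ℙ)
    (hεmean : 𝔼[ε] = 0) (hε'mean : 𝔼[ε'] = 0)
    (hεvar : variance ε ℙ = σ ^ 2) (hε'var : variance ε' ℙ = σ ^ 2)
    (hεcov : 𝔼[fun ω => ε ω * ε' ω] - 𝔼[ε] * 𝔼[ε'] = 0)
    (hmutual : iIndepFun (mixBundle μ z z' ε ε') ℙ) :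
    (1 / 2) * 𝔼[fun ω =>
        (((∑ j, ∑ b, μ j b ω * z' j b ω) + ε' ω)
          - ((∑ j, ∑ b, μ j b ω * z j b ω) + ε ω)) ^ 2]
      = σ ^ 2 + m * τ ^ 2 * (1 - (1 / (m : ℝ)) * ∑ j, ∑ b, φ j b * φ' j b) := by
  classical
  set X : Option (Fin m) → Ω → ℝ := fun i => mixIncrement i ∘ mixBundle μ z z' ε ε' i
  have hXnone : X none = fun ω => ε' ω - ε ω := rfl
  have hXsome : ∀ j, X (some j) = fun ω => ∑ b, μ j b ω * (z' j b ω - z j b ω) := fun _ => rfl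
  have hXindep : iIndepFun X ℙ := hmutual.comp _ measurable_mixIncrement
  have hμw : ∀ j, (fun ω b => μ j b ω) ⟂ᵢ[ℙ] (fun ω b => z' j b ω - z j b ω) := fun j =>
    (hμ_zz' j).comp (ψ := fun p : (Fin (B j) → ℝ) × (Fin (B j) → ℝ) => p.2 - p.1)
      measurable_id (by fun_prop)
  have hw : ∀ j b, MemLp (fun ω => z' j b ω - z j b ω) 2 ℙ := fun j b =>
    (memLp_of_zero_or_one (hz'meas j b) (hz'01 j b)).sub
      (memLp_of_zero_or_one (hzmeas j b) (hz01 j b))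
  have hX2 : ∀ i, MemLp (X i) 2 ℙ := by
    rintro (_ | j)
    exacts [hε'L2.sub hεL2, memLp_sum_mul_of_indepFun (hμL2 j) (hw j) (hμw j)]
  have hXmean : ∀ i, 𝔼[X i] = 0 := by
    rintro (_ | j)
    · rw [hXnone, integral_sub (hε'L2.integrable one_le_two) (hεL2.integrable one_le_two),
        hεmean, hε'mean, sub_zero]
    · exact integral_sum_mul_of_indepFun (hμL2 j) (hw j) (hμw j) (hμmean j)
  have hnoise : ∫ ω, X none ω ^ 2 = 2 * σ ^ 2 := by
    have hcov : cov[ε', ε] = 0 := by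
      rw [covariance_comm, covariance_eq_sub hεL2 hε'L2]
      exact hεcov
    rw [hXnone, integral_sq_sub_of_covariance_eq_zero hε'L2 hεL2 hε'mean hεmean hcov, hεvar,
      hε'var]
    ring
  have htree : ∀ j, ∫ ω, X (some j) ω ^ 2 = 2 * τ ^ 2 * (1 - ∑ b, φ j b * φ' j b) := fun j => by
    rw [hXsome, integral_sq_sum_mul_of_indepFun (hμL2 j) (hw j) (hμw j)
        (integral_mul_eq_ite_of_iIndepFun (fun b => (hμL2 j b).1) (hμmean j) (hμvar j)
          (hμindep j)),
      sum_integral_sq_sub_of_zero_or_one (hzmeas j) (hz'meas j) (hz01 j) (hz'01 j) (hzsum j)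
        (hz'sum j) (hzprob j) (hz'prob j) (fun b => hzz' j b b)]
    ring
  have hdiff : ∀ ω, ((∑ j, ∑ b, μ j b ω * z' j b ω) + ε' ω)
      - ((∑ j, ∑ b, μ j b ω * z j b ω) + ε ω) = ∑ i, X i ω := fun ω => by
    simp only [Fintype.sum_option, hXnone, hXsome, mul_sub, Finset.sum_sub_distrib]
    ring
  simp_rw [hdiff]
  rw [integral_sq_sum_of_pairwise_indepFun hX2 hXmean fun i k hik => hXindep.indepFun hik,
    Fintype.sum_option, hnoise, Finset.sum_congr rfl fun j _ => htree j, ← Finset.mul_sum,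
    Finset.sum_sub_distrib]
  have hm' : (m : ℝ) ≠ 0 := Nat.cast_ne_zero.2 (by omega)
  field_simp
  simp

/-- **Conditional semivariogram of RPBART.**
`(1/2)·E[(Y′ − Y)²] = σ² + m·τ²·(1 − (1/m)·Σ_{j=1}^m Σ_{b=1}^{B_j} φ_{bj}·φ′_{bj})`: the
semivariogram of the RPBART model conditional on the trees and bandwidth parameters equals
the noise variance plus `m·τ²` times one minus the average probability that the two inputs
are assigned to the same terminal-node partition. -/
theorem rpbart_conditional_semivariogram
    {Ω : Type*} [MeasureSpace Ω] [IsProbabilityMeasure (ℙ : Measure Ω)]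
    (m : ℕ) (hm : 1 ≤ m) (B : Fin m → ℕ) (hB : ∀ j, 1 ≤ B j)
    (τ σ : ℝ) (hτ : 0 < τ) (hσ : 0 ≤ σ)
    (μ z z' : (j : Fin m) → Fin (B j) → Ω → ℝ)
    (φ φ' : (j : Fin m) → Fin (B j) → ℝ)
    (ε ε' : Ω → ℝ)
    (hμL2 : ∀ j b, MemLp (μ j b) 2 ℙ)
    (hμmean : ∀ j b, 𝔼[μ j b] = 0)
    (hμvar : ∀ j b, variance (μ j b) ℙ = τ ^ 2)
    (hμindep : ∀ j, iIndepFun (μ j) ℙ)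
    (hzmeas : ∀ j b, Measurable (z j b)) (hz'meas : ∀ j b, Measurable (z' j b))
    (hz01 : ∀ j b ω, z j b ω = 0 ∨ z j b ω = 1)
    (hz'01 : ∀ j b ω, z' j b ω = 0 ∨ z' j b ω = 1)
    (hzsum : ∀ j, ∀ᵐ ω ∂ℙ, (∑ b, z j b ω) = 1)
    (hz'sum : ∀ j, ∀ᵐ ω ∂ℙ, (∑ b, z' j b ω) = 1)
    (hzprob : ∀ j b, (ℙ {ω | z j b ω = 1}).toReal = φ j b)
    (hz'prob : ∀ j b, (ℙ {ω | z' j b ω = 1}).toReal = φ' j b)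
    (hμ_zz' : ∀ j, IndepFun (fun ω (b : Fin (B j)) => μ j b ω)
        (fun ω => ((fun b => z j b ω), fun b => z' j b ω)) ℙ)
    (hzz' : ∀ j b d, IndepFun (z j b) (z' j d) ℙ)
    (hεL2 : MemLp ε 2 ℙ) (hε'L2 : MemLp ε' 2 ℙ)
    (hεmean : 𝔼[ε] = 0) (hε'mean : 𝔼[ε'] = 0)
    (hεvar : variance ε ℙ = σ ^ 2) (hε'var : variance ε' ℙ = σ ^ 2)
    (hεcov : 𝔼[fun ω => ε ω * ε' ω] - 𝔼[ε] * 𝔼[ε'] = 0)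
    (hmutual : iIndepFun (mixBundle μ z z' ε ε') ℙ) :
    (1 / 2) * 𝔼[fun ω =>
        (((∑ j, ∑ b, μ j b ω * z' j b ω) + ε' ω)
          - ((∑ j, ∑ b, μ j b ω * z j b ω) + ε ω)) ^ 2]
      = σ ^ 2 + m * τ ^ 2 * (1 - (1 / (m : ℝ)) * ∑ j, ∑ b, φ j b * φ' j b) :=
  rpbart_conditional_semivariogram_general m hm B τ σ μ z z' φ φ' ε ε' hμL2 hμmean hμvar hμindep
    hzmeas hz'meas hz01 hz'01 hzsum hz'sum hzprob hz'prob hμ_zz' hzz' hεL2 hε'L2 hεmean hε'mean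
    hεvar hε'var hεcov hmutual
end

section
/- (1/2)·Var(Y − Y′) = σ² + (τ_w² + 1/K²)·Σ_{l=1}^K (V_l − ρ_l) + τ_w²·(1 − Φ̄)·Σ_{l=1}^K (ρ_l + f̄_l²), i.e., the semivariogram of the model-mixing response conditional on the trees and bandwidths decomposes into the noise variance, the emulator semivariogram components ν_l^{(f)} = V_l − ρ_l scaled by (τ_w² + 1/K²), and the weight semivariogram component τ_w²·(1 − Φ̄) scaled by Σ_l (ρ_l + f̄_l²) (Theorem: conditional semivariogram for model mixing). -/
/-!
`Y − Y′` is the sum of the `K` terms `W_l F_l − W′_l F′_l` and of `ε − ε′`; these are functions of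
disjoint groups of independent blocks, hence pairwise independent, so the variance splits into
the variances of the terms. Within one term the weight pair is independent of the emulator pair,
which turns every moment of `W_l F_l` and `W′_l F′_l` into a product of a weight moment and an
emulator moment.
-/

open MeasureTheory ProbabilityTheory

namespace ProbabilityTheory

variable {Ω : Type*} [MeasurableSpace Ω] {μ : Measure Ω}

lemma IndepFun.memLp_two_mul_s8 {X Y : Ω → ℝ} (h : X ⟂ᵢ[μ] Y) (hX : MemLp X 2 μ)
    (hY : MemLp Y 2 μ) : MemLp (X * Y) 2 μ := by
  refine (memLp_two_iff_integrable_sq (hX.1.mul hY.1)).2 ?_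
  simp_rw [Pi.mul_apply, mul_pow]
  exact (h.comp (measurable_id.pow_const 2) (measurable_id.pow_const 2)).integrable_mul
    hX.integrable_sq hY.integrable_sq

lemma IndepFun.covariance_mul_mul [IsProbabilityMeasure μ] {X X' Y Y' : Ω → ℝ}
    (h : (fun ω ↦ (X ω, X' ω)) ⟂ᵢ[μ] (fun ω ↦ (Y ω, Y' ω)))
    (hX : MemLp X 2 μ) (hX' : MemLp X' 2 μ) (hY : MemLp Y 2 μ) (hY' : MemLp Y' 2 μ) :
    cov[X * Y, X' * Y'; μ] = cov[X, X'; μ] * cov[Y, Y'; μ] + cov[X, X'; μ] * (μ[Y] * μ[Y'])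
      + μ[X] * μ[X'] * cov[Y, Y'; μ] := by
  have hXY : X ⟂ᵢ[μ] Y := h.comp measurable_fst measurable_fst
  have hX'Y' : X' ⟂ᵢ[μ] Y' := h.comp measurable_snd measurable_snd
  have hXX'YY' : (X * X') ⟂ᵢ[μ] (Y * Y') :=
    h.comp (measurable_fst.mul measurable_snd) (measurable_fst.mul measurable_snd)
  have hswap : X * Y * (X' * Y') = X * X' * (Y * Y') := by ring
  rw [covariance_eq_sub (hXY.memLp_two_mul_s8 hX hY) (hX'Y'.memLp_two_mul_s8 hX' hY'),
    covariance_eq_sub hX hX', covariance_eq_sub hY hY', hswap,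
    hXX'YY'.integral_mul_eq_mul_integral (hX.1.mul hX'.1) (hY.1.mul hY'.1),
    hXY.integral_mul_eq_mul_integral hX.1 hY.1, hX'Y'.integral_mul_eq_mul_integral hX'.1 hY'.1]
  ring

lemma IndepFun.variance_mul [IsProbabilityMeasure μ] {X Y : Ω → ℝ} (h : X ⟂ᵢ[μ] Y)
    (hX : MemLp X 2 μ) (hY : MemLp Y 2 μ) :
    Var[X * Y; μ] = Var[X; μ] * Var[Y; μ] + Var[X; μ] * μ[Y] ^ 2 + μ[X] ^ 2 * Var[Y; μ] := by
  have hdiag : (fun ω ↦ (X ω, X ω)) ⟂ᵢ[μ] (fun ω ↦ (Y ω, Y ω)) :=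
    h.comp (measurable_id.prodMk measurable_id) (measurable_id.prodMk measurable_id)
  rw [← covariance_self (h.memLp_two_mul_s8 hX hY).aemeasurable,
    hdiag.covariance_mul_mul hX hX hY hY, covariance_self hX.aemeasurable,
    covariance_self hY.aemeasurable]
  ring

lemma IndepFun.half_variance_mul_sub_mul [IsProbabilityMeasure μ] {X X' Y Y' : Ω → ℝ}
    (h : (fun ω ↦ (X ω, X' ω)) ⟂ᵢ[μ] (fun ω ↦ (Y ω, Y' ω)))
    (hX : MemLp X 2 μ) (hX' : MemLp X' 2 μ) (hY : MemLp Y 2 μ) (hY' : MemLp Y' 2 μ)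
    (hmeanX : μ[X'] = μ[X]) (hvarX : Var[X'; μ] = Var[X; μ])
    (hmeanY : μ[Y'] = μ[Y]) (hvarY : Var[Y'; μ] = Var[Y; μ]) :
    1 / 2 * Var[fun ω ↦ X ω * Y ω - X' ω * Y' ω; μ]
      = (Var[X; μ] + μ[X] ^ 2) * (Var[Y; μ] - cov[Y, Y'; μ])
        + (Var[X; μ] - cov[X, X'; μ]) * (cov[Y, Y'; μ] + μ[Y] ^ 2) := by
  have hXY : X ⟂ᵢ[μ] Y := h.comp measurable_fst measurable_fst
  have hX'Y' : X' ⟂ᵢ[μ] Y' := h.comp measurable_snd measurable_snd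
  change 1 / 2 * Var[X * Y - X' * Y'; μ] = _
  rw [variance_sub (hXY.memLp_two_mul_s8 hX hY) (hX'Y'.memLp_two_mul_s8 hX' hY'),
    hXY.variance_mul hX hY, hX'Y'.variance_mul hX' hY', h.covariance_mul_mul hX hX' hY hY',
    hmeanX, hvarX, hmeanY, hvarY]
  ring

lemma iIndepFun.variance_sum_mul_add_sub_sum_mul_add {ι : Type*} [Fintype ι]
    {X X' Y Y' : ι → Ω → ℝ} {Z Z' : Ω → ℝ}
    (hindep : iIndepFun
      (fun b : ι ⊕ (ι ⊕ Unit) =>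
        Sum.elim (fun i => fun ω => (X i ω, X' i ω))
          (Sum.elim (fun i => fun ω => (Y i ω, Y' i ω))
            (fun _ => fun ω => (Z ω, Z' ω))) b) μ)
    (hX : ∀ i, MemLp (X i) 2 μ) (hX' : ∀ i, MemLp (X' i) 2 μ)
    (hY : ∀ i, MemLp (Y i) 2 μ) (hY' : ∀ i, MemLp (Y' i) 2 μ)
    (hZ : MemLp Z 2 μ) (hZ' : MemLp Z' 2 μ) :
    Var[fun ω ↦ ((∑ i, X i ω * Y i ω) + Z ω) - ((∑ i, X' i ω * Y' i ω) + Z' ω); μ]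
      = ∑ i, Var[fun ω ↦ X i ω * Y i ω - X' i ω * Y' i ω; μ] + Var[fun ω ↦ Z ω - Z' ω; μ] := by
  have hblock : ∀ b : ι ⊕ (ι ⊕ Unit), AEMeasurable (Sum.elim (fun i => fun ω => (X i ω, X' i ω))
      (Sum.elim (fun i => fun ω => (Y i ω, Y' i ω)) (fun _ => fun ω => (Z ω, Z' ω))) b) μ := by
    rintro (i | i | _)
    · exact (hX i).aemeasurable.prodMk (hX' i).aemeasurable
    · exact (hY i).aemeasurable.prodMk (hY' i).aemeasurable
    · exact hZ.aemeasurable.prodMk hZ'.aemeasurable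
  set A : ι ⊕ Unit → Ω → ℝ :=
    Sum.elim (fun i ω ↦ X i ω * Y i ω - X' i ω * Y' i ω) (fun _ ω ↦ Z ω - Z' ω) with hA
  have hsum : (fun ω ↦ ((∑ i, X i ω * Y i ω) + Z ω) - ((∑ i, X' i ω * Y' i ω) + Z' ω))
      = ∑ b, A b := by
    funext ω
    simp only [Finset.sum_apply, Fintype.sum_sum_type, hA, Sum.elim_inl, Sum.elim_inr,
      Finset.univ_unique, Finset.sum_singleton, Finset.sum_sub_distrib]
    ring
  have hAL2 : ∀ b, MemLp (A b) 2 μ := by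
    rintro (i | _)
    · have hpair : (fun ω ↦ (X i ω, X' i ω)) ⟂ᵢ[μ] (fun ω ↦ (Y i ω, Y' i ω)) :=
        hindep.indepFun (i := Sum.inl i) (j := Sum.inr (Sum.inl i)) Sum.inl_ne_inr
      exact ((hpair.comp measurable_fst measurable_fst).memLp_two_mul_s8 (hX i) (hY i)).sub
        ((hpair.comp measurable_snd measurable_snd).memLp_two_mul_s8 (hX' i) (hY' i))
    · exact hZ.sub hZ'
  have hApair : Set.Pairwise (Finset.univ : Finset (ι ⊕ Unit)) fun b c ↦ A b ⟂ᵢ[μ] A c := by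
    have hφ : Measurable (fun p : (ℝ × ℝ) × (ℝ × ℝ) ↦ p.1.1 * p.2.1 - p.1.2 * p.2.2) := by
      fun_prop
    have hψ : Measurable (fun p : ℝ × ℝ ↦ p.1 - p.2) := measurable_fst.sub measurable_snd
    rintro (i | ⟨⟩) - (j | ⟨⟩) - hij
    · exact (hindep.indepFun_prodMk_prodMk₀ hblock (Sum.inl i) (Sum.inr (Sum.inl i))
        (Sum.inl j) (Sum.inr (Sum.inl j)) (by simpa using hij) Sum.inl_ne_inr Sum.inr_ne_inl
        (by simpa using hij)).comp hφ hφ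
    · exact (hindep.indepFun_prodMk₀ hblock (Sum.inl i) (Sum.inr (Sum.inl i))
        (Sum.inr (Sum.inr ())) Sum.inl_ne_inr (by simp)).comp hφ hψ
    · exact ((hindep.indepFun_prodMk₀ hblock (Sum.inl j) (Sum.inr (Sum.inl j))
        (Sum.inr (Sum.inr ())) Sum.inl_ne_inr (by simp)).comp hφ hψ).symm
    · exact absurd rfl hij
  rw [hsum, IndepFun.variance_sum (fun b _ ↦ hAL2 b) hApair, Fintype.sum_sum_type]
  simp [hA]

end ProbabilityTheory

theorem model_mixing_conditional_semivariogram_general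
    {Ω : Type*} [MeasureSpace Ω] [IsProbabilityMeasure (ℙ : Measure Ω)]
    (K : ℕ) (σ τw2 Φbar : ℝ)
    (fbar V ρ : Fin K → ℝ)
    (W W' F F' : Fin K → Ω → ℝ) (ε ε' : Ω → ℝ)
    (hWL2 : ∀ l, MemLp (W l) 2 ℙ) (hW'L2 : ∀ l, MemLp (W' l) 2 ℙ)
    (hFL2 : ∀ l, MemLp (F l) 2 ℙ) (hF'L2 : ∀ l, MemLp (F' l) 2 ℙ)
    (hεL2 : MemLp ε 2 ℙ) (hε'L2 : MemLp ε' 2 ℙ)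
    (hmutual : iIndepFun
      (fun i : Fin K ⊕ (Fin K ⊕ Unit) =>
        Sum.elim (fun l => fun ω => (W l ω, W' l ω))
          (Sum.elim (fun l => fun ω => (F l ω, F' l ω))
            (fun _ => fun ω => (ε ω, ε' ω))) i) ℙ)
    (hWmean : ∀ l, 𝔼[W l] = 1 / (K : ℝ)) (hW'mean : ∀ l, 𝔼[W' l] = 1 / (K : ℝ))
    (hWvar : ∀ l, variance (W l) ℙ = τw2) (hW'var : ∀ l, variance (W' l) ℙ = τw2)
    (hWcov : ∀ l, 𝔼[fun ω => W l ω * W' l ω] - 𝔼[W l] * 𝔼[W' l] = τw2 * Φbar)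
    (hFmean : ∀ l, 𝔼[F l] = fbar l) (hF'mean : ∀ l, 𝔼[F' l] = fbar l)
    (hFvar : ∀ l, variance (F l) ℙ = V l) (hF'var : ∀ l, variance (F' l) ℙ = V l)
    (hFcov : ∀ l, 𝔼[fun ω => F l ω * F' l ω] - 𝔼[F l] * 𝔼[F' l] = ρ l)
    (hεvar : variance ε ℙ = σ ^ 2) (hε'var : variance ε' ℙ = σ ^ 2)
    (hεcov : 𝔼[fun ω => ε ω * ε' ω] - 𝔼[ε] * 𝔼[ε'] = 0) :
    (1 / 2) * variance (fun ω =>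
        ((∑ l, W l ω * F l ω) + ε ω) - ((∑ l, W' l ω * F' l ω) + ε' ω)) ℙ
      = σ ^ 2 + (τw2 + 1 / (K : ℝ) ^ 2) * (∑ l, (V l - ρ l))
        + τw2 * (1 - Φbar) * (∑ l, (ρ l + (fbar l) ^ 2)) := by
  have hpair : ∀ l, (fun ω ↦ (W l ω, W' l ω)) ⟂ᵢ (fun ω ↦ (F l ω, F' l ω)) := fun l ↦
    hmutual.indepFun (i := Sum.inl l) (j := Sum.inr (Sum.inl l)) Sum.inl_ne_inr
  have hterm : ∀ l, 1 / 2 * Var[fun ω ↦ W l ω * F l ω - W' l ω * F' l ω]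
      = (τw2 + 1 / (K : ℝ) ^ 2) * (V l - ρ l) + τw2 * (1 - Φbar) * (ρ l + fbar l ^ 2) := by
    intro l
    have hcovW : cov[W l, W' l] = τw2 * Φbar :=
      (covariance_eq_sub (hWL2 l) (hW'L2 l)).trans (hWcov l)
    have hcovF : cov[F l, F' l] = ρ l := (covariance_eq_sub (hFL2 l) (hF'L2 l)).trans (hFcov l)
    rw [(hpair l).half_variance_mul_sub_mul (hWL2 l) (hW'L2 l) (hFL2 l) (hF'L2 l)
      ((hW'mean l).trans (hWmean l).symm) ((hW'var l).trans (hWvar l).symm)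
      ((hF'mean l).trans (hFmean l).symm) ((hF'var l).trans (hFvar l).symm),
      hcovW, hcovF, hWvar, hWmean, hFvar, hFmean]
    ring
  have hnoise : Var[fun ω ↦ ε ω - ε' ω] = 2 * σ ^ 2 := by
    rw [variance_fun_sub hεL2 hε'L2, (covariance_eq_sub hεL2 hε'L2).trans hεcov, hεvar, hε'var]
    ring
  rw [hmutual.variance_sum_mul_add_sub_sum_mul_add hWL2 hW'L2 hFL2 hF'L2 hεL2 hε'L2, mul_add,
    Finset.mul_sum, Finset.sum_congr rfl fun l _ ↦ hterm l, hnoise, Finset.sum_add_distrib,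
    ← Finset.mul_sum, ← Finset.mul_sum]
  ring

/-- **Conditional semivariogram for model mixing.**
`(1/2)·Var(Y − Y′) = σ² + (τ_w² + 1/K²)·Σ_{l=1}^K (V_l − ρ_l)
  + τ_w²·(1 − Φ̄)·Σ_{l=1}^K (ρ_l + f̄_l²)`:
the semivariogram of the model-mixing response conditional on the trees and bandwidths
decomposes into the noise variance, the emulator semivariogram components
`ν_l^{(f)} = V_l − ρ_l` scaled by `(τ_w² + 1/K²)`, and the weight semivariogram component
`τ_w²·(1 − Φ̄)` scaled by `Σ_l (ρ_l + f̄_l²)`. -/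
theorem model_mixing_conditional_semivariogram
    {Ω : Type*} [MeasureSpace Ω] [IsProbabilityMeasure (ℙ : Measure Ω)]
    (K : ℕ) (hK : 1 ≤ K) (σ τw2 Φbar : ℝ)
    (hσ : 0 ≤ σ) (hτw2 : 0 ≤ τw2) (hΦbar0 : 0 ≤ Φbar) (hΦbar1 : Φbar ≤ 1)
    (fbar V ρ : Fin K → ℝ) (hV : ∀ l, 0 ≤ V l)
    (W W' F F' : Fin K → Ω → ℝ) (ε ε' : Ω → ℝ)
    (hWL2 : ∀ l, MemLp (W l) 2 ℙ) (hW'L2 : ∀ l, MemLp (W' l) 2 ℙ)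
    (hFL2 : ∀ l, MemLp (F l) 2 ℙ) (hF'L2 : ∀ l, MemLp (F' l) 2 ℙ)
    (hεL2 : MemLp ε 2 ℙ) (hε'L2 : MemLp ε' 2 ℙ)
    (hmutual : iIndepFun
      (fun i : Fin K ⊕ (Fin K ⊕ Unit) =>
        Sum.elim (fun l => fun ω => (W l ω, W' l ω))
          (Sum.elim (fun l => fun ω => (F l ω, F' l ω))
            (fun _ => fun ω => (ε ω, ε' ω))) i) ℙ)
    (hWmean : ∀ l, 𝔼[W l] = 1 / (K : ℝ)) (hW'mean : ∀ l, 𝔼[W' l] = 1 / (K : ℝ))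
    (hWvar : ∀ l, variance (W l) ℙ = τw2) (hW'var : ∀ l, variance (W' l) ℙ = τw2)
    (hWcov : ∀ l, 𝔼[fun ω => W l ω * W' l ω] - 𝔼[W l] * 𝔼[W' l] = τw2 * Φbar)
    (hFmean : ∀ l, 𝔼[F l] = fbar l) (hF'mean : ∀ l, 𝔼[F' l] = fbar l)
    (hFvar : ∀ l, variance (F l) ℙ = V l) (hF'var : ∀ l, variance (F' l) ℙ = V l)
    (hFcov : ∀ l, 𝔼[fun ω => F l ω * F' l ω] - 𝔼[F l] * 𝔼[F' l] = ρ l)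
    (hεmean : 𝔼[ε] = 0) (hε'mean : 𝔼[ε'] = 0)
    (hεvar : variance ε ℙ = σ ^ 2) (hε'var : variance ε' ℙ = σ ^ 2)
    (hεcov : 𝔼[fun ω => ε ω * ε' ω] - 𝔼[ε] * 𝔼[ε'] = 0) :
    (1 / 2) * variance (fun ω =>
        ((∑ l, W l ω * F l ω) + ε ω) - ((∑ l, W' l ω * F' l ω) + ε' ω)) ℙ
      = σ ^ 2 + (τw2 + 1 / (K : ℝ) ^ 2) * (∑ l, (V l - ρ l))
        + τw2 * (1 - Φbar) * (∑ l, (ρ l + (fbar l) ^ 2)) :=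
  model_mixing_conditional_semivariogram_general K σ τw2 Φbar fbar V ρ W W' F F' ε ε' hWL2 hW'L2
    hFL2 hF'L2 hεL2 hε'L2 hmutual hWmean hW'mean hWvar hW'var hWcov hFmean hF'mean hFvar hF'var
    hFcov hεvar hε'var hεcov
end

section
/- The penalized L₂ (sparsegen-linear) projection maps any weight vector onto the probability simplex: each u_l = max((w_l − λ_Q)/(1 − T), 0) satisfies u_l ≥ 0, and Σ_{l=1}^K u_l = 1. -/
/-!
On the sorted weights `a = w ∘ σ` the threshold `λ_Q` is chosen so that the `Q + 1` largest
weights exceed it by a total of exactly `1 - T`. The defining inequality at `Q` says `a Q > λ_Q`,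
hence every weight of index `≤ Q` exceeds `λ_Q`; its failure at `Q + 1` says `a (Q + 1) ≤ λ_Q`,
hence no later weight does. So the positive parts of `a - λ_Q` sum to `1 - T`.
-/

open Finset

theorem sum_max_sub_zero_eq_sum_of_threshold {ι : Type*} [Fintype ι] (f : ι → ℝ) (s : Finset ι)
    (lam : ℝ) (hs : ∀ i ∈ s, lam ≤ f i) (hsc : ∀ i ∉ s, f i ≤ lam) :
    ∑ i, max (f i - lam) 0 = ∑ i ∈ s, (f i - lam) := by
  rw [← sum_subset (subset_univ s) fun i _ hi => max_eq_right (sub_nonpos.2 (hsc i hi))]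
  exact sum_congr rfl fun i hi => max_eq_left (sub_nonneg.2 (hs i hi))

theorem sum_max_sub_div_zero_eq_one {ι : Type*} [Fintype ι] (f : ι → ℝ) (s : Finset ι)
    (lam c : ℝ) (hc : 0 < c) (hs : ∀ i ∈ s, lam ≤ f i) (hsc : ∀ i ∉ s, f i ≤ lam)
    (hsum : ∑ i ∈ s, (f i - lam) = c) :
    ∑ i, max ((f i - lam) / c) 0 = 1 := by
  have hmax (i : ι) : max ((f i - lam) / c) 0 = max (f i - lam) 0 / c := by
    rw [← max_div_div_right hc.le, zero_div]
  simp_rw [hmax, ← sum_div, sum_max_sub_zero_eq_sum_of_threshold f s lam hs hsc, hsum,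
    div_self hc.ne']

namespace SparsegenLinear

variable {K : ℕ} (a : Fin K → ℝ) (c : ℝ)

/-- The threshold `λ_Q` for the sorted weights `a` and the budget `c = 1 - T`. -/
noncomputable def threshold (Q : Fin K) : ℝ :=
  ((∑ l ∈ Iic Q, a l) - c) / ((Q : ℕ) + 1)

theorem sum_Iic_sub_threshold (Q : Fin K) : ∑ l ∈ Iic Q, (a l - threshold a c Q) = c := by
  rw [sum_sub_distrib, sum_const, Fin.card_Iic, nsmul_eq_mul, threshold]
  field_simp
  push_cast
  ring

theorem threshold_lt_of_sum_Iic_lt {Q : Fin K}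
    (hQ : ∑ l ∈ Iic Q, a l < c + ((Q : ℕ) + 1) * a Q) : threshold a c Q < a Q := by
  rw [threshold, div_lt_iff₀ (by positivity)]
  linarith

theorem sum_Iic_succ {Q s : Fin K} (hs : (s : ℕ) = Q + 1) :
    ∑ l ∈ Iic s, a l = a s + ∑ l ∈ Iic Q, a l := by
  have hIic : Iic s = insert s (Iic Q) := by
    ext x
    simp only [mem_Iic, mem_insert, Fin.le_def, Fin.ext_iff]
    omega
  rw [hIic, sum_insert (by simp [Fin.le_def, hs])]

theorem le_threshold_of_le_sum_Iic_succ {Q s : Fin K} (hs : (s : ℕ) = Q + 1)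
    (h : c + ((s : ℕ) + 1) * a s ≤ ∑ l ∈ Iic s, a l) : a s ≤ threshold a c Q := by
  rw [sum_Iic_succ a hs, hs] at h
  push_cast at h
  rw [threshold, le_div_iff₀ (by positivity)]
  linarith

variable {a c}

theorem threshold_le_of_le {Q : Fin K} (ha : Antitone a)
    (hQ : ∑ l ∈ Iic Q, a l < c + ((Q : ℕ) + 1) * a Q) {i : Fin K} (hi : i ≤ Q) :
    threshold a c Q ≤ a i :=
  (threshold_lt_of_sum_Iic_lt a c hQ).le.trans (ha hi)

theorem le_threshold_of_lt {Q : Fin K} (ha : Antitone a)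
    (hmax : ∀ t, Q < t → c + ((t : ℕ) + 1) * a t ≤ ∑ l ∈ Iic t, a l) {i : Fin K} (hi : Q < i) :
    a i ≤ threshold a c Q := by
  let s : Fin K := ⟨Q + 1, (Fin.lt_def.1 hi).succ_le.trans_lt i.isLt⟩
  have hsi : s ≤ i := Fin.le_def.2 (Fin.lt_def.1 hi).succ_le
  exact (ha hsi).trans
    (le_threshold_of_le_sum_Iic_succ a c rfl (hmax s (Fin.lt_def.2 (Nat.lt_succ_self _))))

end SparsegenLinear

open SparsegenLinear in
theorem sparsegen_linear_projection_mem_simplex_general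
    (K : ℕ) (w : Fin K → ℝ) (T : ℝ) (hT1 : T < 1)
    (σ : Equiv.Perm (Fin K)) (hsorted : Antitone (fun i => w (σ i)))
    (S : Finset (Fin K))
    (hS : S = Finset.univ.filter
      (fun t : Fin K => (∑ l ∈ Finset.Iic t, w (σ l)) < 1 - T + ((t : ℕ) + 1) * w (σ t)))
    (hSne : S.Nonempty)
    (Q : Fin K) (hQ : Q = S.max' hSne)
    (lam : ℝ) (hlam : lam = ((∑ l ∈ Finset.Iic Q, w (σ l)) - 1 + T) / ((Q : ℕ) + 1))
    (u : Fin K → ℝ) (hu : u = fun l => max ((w l - lam) / (1 - T)) 0) :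
    (∀ l, 0 ≤ u l) ∧ (∑ l, u l) = 1 := by
  subst hu
  refine ⟨fun l => le_max_right _ _, ?_⟩
  have hlam' : lam = threshold (fun i => w (σ i)) (1 - T) Q := by
    rw [hlam, threshold]
    ring
  have hQS : Q ∈ S := hQ ▸ S.max'_mem hSne
  have hQ_lt : ∑ l ∈ Iic Q, w (σ l) < 1 - T + ((Q : ℕ) + 1) * w (σ Q) := by
    simpa [hS] using hQS
  have hmax (t : Fin K) (ht : Q < t) :
      1 - T + ((t : ℕ) + 1) * w (σ t) ≤ ∑ l ∈ Iic t, w (σ l) := by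
    have htS : t ∉ S := fun htS => (hQ ▸ S.le_max' t htS).not_gt ht
    simpa [hS] using htS
  rw [← Equiv.sum_comp σ, hlam']
  exact sum_max_sub_div_zero_eq_one _ (Iic Q) _ _ (sub_pos.2 hT1)
    (fun i hi => threshold_le_of_le hsorted hQ_lt (mem_Iic.1 hi))
    (fun i hi => le_threshold_of_lt hsorted hmax (by simpa using hi))
    (sum_Iic_sub_threshold _ _ Q)

/-- **The penalized `L₂` (sparsegen-linear) projection lands on the probability simplex.**
Given `w ∈ ℝ^K` and a temperature `0 ≤ T < 1`, sort `w` in decreasing order via a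
permutation `σ`, let `Q` be the largest index `t` (here `0`-based, so `t` stands for
`t+1` in `1`-based notation) with `1 − T + (t+1)·w_(t) > Σ_{l ≤ t} w_(l)`, and set
`λ_Q = (Σ_{k ≤ Q} w_(k) − 1 + T)/(Q+1)`.  Then the projected weights
`u_l = max((w_l − λ_Q)/(1 − T), 0)` satisfy `u_l ≥ 0` and `Σ_{l=1}^K u_l = 1`. -/
theorem sparsegen_linear_projection_mem_simplex
    (K : ℕ) (hK : 1 ≤ K) (w : Fin K → ℝ) (T : ℝ) (hT0 : 0 ≤ T) (hT1 : T < 1)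
    (σ : Equiv.Perm (Fin K)) (hsorted : Antitone (fun i => w (σ i)))
    (S : Finset (Fin K))
    (hS : S = Finset.univ.filter
      (fun t : Fin K => (∑ l ∈ Finset.Iic t, w (σ l)) < 1 - T + ((t : ℕ) + 1) * w (σ t)))
    (hSne : S.Nonempty)
    (Q : Fin K) (hQ : Q = S.max' hSne)
    (lam : ℝ) (hlam : lam = ((∑ l ∈ Finset.Iic Q, w (σ l)) - 1 + T) / ((Q : ℕ) + 1))
    (u : Fin K → ℝ) (hu : u = fun l => max ((w l - lam) / (1 - T)) 0) :
    (∀ l, 0 ≤ u l) ∧ (∑ l, u l) = 1 :=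
  sparsegen_linear_projection_mem_simplex_general K w T hT1 σ hsorted S hS hSne Q hQ lam hlam u hu
end
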